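/- If A generates a strongly continuous one-parameter group of operators e^{tA} in a Banach space E with ‖e^{tA}f‖ = ‖f‖ for all f and t, then for every integer n ≥ 2 there exists a constant C(n) such that for all ε > 0, all integers 1 ≤ m ≤ n−1, and all f in the domain of A^n, the interpolation inequality ‖A^m f‖ ≤ ε^{n−m} ‖A^n f‖ + ε^{−m} C(n) ‖f‖ holds. -/

import Mathlib

/-!
Statement 3 (Lemma 2.2): if `A` generates a strongly continuous one-parameter group of
isometries `e^{tA}` of a Banach space `E`, then for every `n ≥ 2` there is a constant `C(n)`
such that for all `ε > 0`, all `1 ≤ m ≤ n − 1` and all `f` in the domain of `A^n`,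
`‖A^m f‖ ≤ ε^{n−m} ‖A^n f‖ + ε^{−m} C(n) ‖f‖`.
-/

open Filter Topology

variable {E : Type*} [NormedAddCommGroup E] [NormedSpace ℝ E] [CompleteSpace E]

/-- `InGraph A f g` means `f` is in the domain of the (partially defined) operator `A`
and `A f = g`. -/
def InGraph (A : E →ₗ.[ℝ] E) (f g : E) : Prop :=
  ∃ hf : f ∈ A.domain, A ⟨f, hf⟩ = g

/-- `PowGraph A n f g` means `f` is in the domain of `A^n` and `A^n f = g`. -/
def PowGraph (A : E →ₗ.[ℝ] E) : ℕ → E → E → Prop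
  | 0 => fun f g => g = f
  | n + 1 => fun f g => ∃ h : E, InGraph A f h ∧ PowGraph A n h g

/-- The hypotheses: `U` is a strongly continuous one-parameter group of surjective linear
isometries of `E`, and `A` is its infinitesimal generator
`A f = lim_{t → 0} (U t f - f)/t` (with domain the set of `f` for which the limit exists). -/
structure IsometryGroupGenerator (U : ℝ → E →L[ℝ] E) (A : E →ₗ.[ℝ] E) : Prop where
  map_zero : U 0 = ContinuousLinearMap.id ℝ E
  map_add : ∀ s t : ℝ, U (s + t) = (U s).comp (U t)
  isometry : ∀ (t : ℝ) (f : E), ‖U t f‖ = ‖f‖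
  surjective : ∀ t : ℝ, Function.Surjective (U t)
  strongly_continuous : ∀ f : E, Continuous fun t : ℝ => U t f
  generator_domain : ∀ f : E, f ∈ A.domain ↔
    ∃ g : E, Tendsto (fun t : ℝ => t⁻¹ • (U t f - f)) (𝓝[≠] (0 : ℝ)) (𝓝 g)
  generator_spec : ∀ (f : E) (hf : f ∈ A.domain),
    Tendsto (fun t : ℝ => t⁻¹ • (U t f - f)) (𝓝[≠] (0 : ℝ)) (𝓝 (A ⟨f, hf⟩))

/-!
For `g` in the domain of `A²`, Taylor's formula for the orbit `s ↦ e^{sA} g` gives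
`‖e^{tA} g - g - t A g‖ ≤ t² ‖A² g‖`, while `‖e^{tA} g - g‖ ≤ 2 ‖g‖` because `e^{tA}` is an
isometry; hence `‖A g‖ ≤ t ‖A² g‖ + (2 / t) ‖g‖` for every `t > 0`. Along the chain
`f, A f, …, A^n f` this bounds each norm by its two neighbours, and an induction on `n` upgrades
it to the interpolation inequality: the case `n - 1`, used at the scale `ε / 8`, absorbs
`‖A^{n-1} f‖` into the left-hand side of the neighbour bound for `‖A^n f‖`.
-/

theorem le_mul_add_div_pow_mul_of_forall_le {c C x y z w : ℝ} (hc : 0 < c) {n : ℕ}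
    (hy : ∀ t : ℝ, 0 < t → y ≤ t * z + c / t * x)
    (hx : ∀ δ : ℝ, 0 < δ → x ≤ δ * y + C / δ ^ n * w) {ε : ℝ} (hε : 0 < ε) :
    y ≤ ε * z + (4 * c) ^ (n + 1) * C / ε ^ (n + 1) * w := by
  have hx' : c / (ε / 2) * x ≤ y / 2 + (4 * c) ^ (n + 1) * C / ε ^ (n + 1) / 2 * w :=
    calc c / (ε / 2) * x
        ≤ c / (ε / 2) * (ε / (4 * c) * y + C / (ε / (4 * c)) ^ n * w) := by
          gcongr
          exact hx _ (by positivity)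
      _ = _ := by
          rw [div_pow, div_div_eq_mul_div]
          field_simp
          ring
  linarith [hy (ε / 2) (by positivity)]

theorem exists_interpolation_const {c : ℝ} (hc : 0 < c) (n : ℕ) :
    ∃ C : ℝ, 0 < C ∧ ∀ a : ℕ → ℝ, (∀ k, 0 ≤ a k) →
      (∀ k < n, ∀ t : ℝ, 0 < t → a (k + 1) ≤ t * a (k + 2) + c / t * a k) →
      ∀ ε : ℝ, 0 < ε → ∀ m ≤ n, a m ≤ ε ^ (n + 1 - m) * a (n + 1) + C / ε ^ m * a 0 := by
  induction n with
  | zero =>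
    refine ⟨1, one_pos, fun a ha _ ε hε m hm => ?_⟩
    obtain rfl : m = 0 := by omega
    have := mul_nonneg hε.le (ha 1)
    simp only [zero_add, Nat.sub_zero, pow_one, pow_zero, div_one, one_mul]
    linarith
  | succ n ih =>
    obtain ⟨C, hC, hinterp⟩ := ih
    refine ⟨((4 * c) ^ (n + 1) + 1) * C, by positivity, fun a ha hrec ε hε m hm => ?_⟩
    have hlow := hinterp a ha fun k hk => hrec k (by omega)
    have htop : a (n + 1) ≤ ε * a (n + 1 + 1) + (4 * c) ^ (n + 1) * C / ε ^ (n + 1) * a 0 :=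
      le_mul_add_div_pow_mul_of_forall_le hc (hrec n n.lt_succ_self)
        (fun δ hδ => by simpa using hlow δ hδ n le_rfl) hε
    rcases hm.lt_or_eq with hm | rfl
    · obtain ⟨j, rfl⟩ : ∃ j, n = m + j := ⟨n - m, by omega⟩
      calc a m ≤ ε ^ (j + 1) * a (m + j + 1) + C / ε ^ m * a 0 := by
            simpa [show m + j + 1 - m = j + 1 by omega] using hlow ε hε m (by omega)
        _ ≤ ε ^ (j + 1) * (ε * a (m + j + 1 + 1) +
              (4 * c) ^ (m + j + 1) * C / ε ^ (m + j + 1) * a 0) + C / ε ^ m * a 0 := by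
            gcongr
        _ = ε ^ (m + j + 1 + 1 - m) * a (m + j + 1 + 1) +
              ((4 * c) ^ (m + j + 1) + 1) * C / ε ^ m * a 0 := by
            rw [show m + j + 1 + 1 - m = j + 1 + 1 by omega, add_assoc m j 1, pow_add ε m]
            field_simp
            ring
    · have := div_nonneg (mul_nonneg hC.le (ha 0)) (pow_pos hε (n + 1)).le
      rw [show n + 1 + 1 - (n + 1) = 1 by omega, pow_one]
      have hsplit : ((4 * c) ^ (n + 1) + 1) * C / ε ^ (n + 1) * a 0 =
          (4 * c) ^ (n + 1) * C / ε ^ (n + 1) * a 0 + C * a 0 / ε ^ (n + 1) := by ring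
      linarith

section

variable {F : Type*} [NormedAddCommGroup F] [NormedSpace ℝ F]

theorem InGraph.unique {A : F →ₗ.[ℝ] F} {f g g' : F} (h : InGraph A f g) (h' : InGraph A f g') :
    g = g' := by
  obtain ⟨_, rfl⟩ := h
  obtain ⟨_, rfl⟩ := h'
  rfl

theorem PowGraph.exists_seq {A : F →ₗ.[ℝ] F} {n : ℕ} {f g : F} (h : PowGraph A n f g) :
    ∃ c : ℕ → F, c 0 = f ∧ c n = g ∧ ∀ k < n, InGraph A (c k) (c (k + 1)) := by
  induction n generalizing f with
  | zero => exact ⟨fun _ => f, rfl, h.symm, by simp⟩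
  | succ n ih =>
    obtain ⟨f', hf', hpow⟩ := h
    obtain ⟨c, rfl, hcn, hc⟩ := ih hpow
    refine ⟨fun | 0 => f | k + 1 => c k, rfl, hcn, fun k hk => ?_⟩
    cases k with
    | zero => exact hf'
    | succ k => exact hc k (by omega)

theorem PowGraph.eq_of_seq {A : F →ₗ.[ℝ] F} {m : ℕ} {c : ℕ → F} {g : F}
    (hc : ∀ k < m, InGraph A (c k) (c (k + 1))) (h : PowGraph A m (c 0) g) : g = c m := by
  induction m generalizing c with
  | zero => exact h
  | succ m ih =>
    obtain ⟨f', hf', hpow⟩ := h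
    rw [hf'.unique (hc 0 (by omega))] at hpow
    exact ih (c := fun k => c (k + 1)) (fun k hk => hc (k + 1) (by omega)) hpow

namespace IsometryGroupGenerator

variable {U : ℝ → F →L[ℝ] F} {A : F →ₗ.[ℝ] F}

theorem hasDerivAt_orbit (hUA : IsometryGroupGenerator U A) {f g : F} (hfg : InGraph A f g)
    (s : ℝ) : HasDerivAt (fun t => U t f) (U s g) s := by
  obtain ⟨hf, rfl⟩ := hfg
  rw [hasDerivAt_iff_tendsto_slope]
  have hslope : ∀ t, slope (fun t => U t f) s t = U s ((t - s)⁻¹ • (U (t - s) f - f)) := by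
    intro t
    rw [slope_def_module, map_smul, map_sub, ← ContinuousLinearMap.comp_apply, ← hUA.map_add,
      add_sub_cancel]
  have hshift : Tendsto (fun t => t - s) (𝓝[≠] s) (𝓝[≠] 0) := by
    refine tendsto_nhdsWithin_of_tendsto_nhds_of_eventually_within _ ?_ ?_
    · have : Tendsto (fun t => t - s) (𝓝 s) (𝓝 0) := by
        simpa using (continuous_sub_right s).tendsto s
      exact this.mono_left nhdsWithin_le_nhds
    · filter_upwards [self_mem_nhdsWithin] with t ht using sub_ne_zero_of_ne ht
  rw [tendsto_congr hslope]
  exact ((U s).continuous.tendsto _).comp ((hUA.generator_spec f hf).comp hshift)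

theorem norm_orbit_sub_le (hUA : IsometryGroupGenerator U A) {f g : F} (hfg : InGraph A f g)
    {t : ℝ} (ht : 0 ≤ t) : ‖U t f - f‖ ≤ ‖g‖ * t := by
  have := norm_image_sub_le_of_norm_deriv_le_segment' (a := 0) (b := t)
    (fun s _ => (hUA.hasDerivAt_orbit hfg s).hasDerivWithinAt)
    (fun s _ => (hUA.isometry s g).le) t ⟨ht, le_rfl⟩
  simpa [hUA.map_zero] using this

theorem norm_orbit_sub_sub_smul_le (hUA : IsometryGroupGenerator U A) {f g h : F}
    (hfg : InGraph A f g) (hgh : InGraph A g h) {t : ℝ} (ht : 0 ≤ t) :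
    ‖U t f - f - t • g‖ ≤ ‖h‖ * t * t := by
  have hderiv : ∀ s, HasDerivAt (fun s => U s f - s • g) (U s g - g) s := fun s =>
    (hUA.hasDerivAt_orbit hfg s).sub (by simpa using (hasDerivAt_id s).smul_const g)
  have := norm_image_sub_le_of_norm_deriv_le_segment' (a := 0) (b := t)
    (fun s _ => (hderiv s).hasDerivWithinAt)
    (fun s hs => (hUA.norm_orbit_sub_le hgh hs.1).trans
      (mul_le_mul_of_nonneg_left hs.2.le (norm_nonneg h))) t ⟨ht, le_rfl⟩
  rw [sub_right_comm]
  simpa [hUA.map_zero] using this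

theorem norm_le_mul_norm_add_div_mul_norm (hUA : IsometryGroupGenerator U A) {f g h : F}
    (hfg : InGraph A f g) (hgh : InGraph A g h) {t : ℝ} (ht : 0 < t) :
    ‖g‖ ≤ t * ‖h‖ + 2 / t * ‖f‖ := by
  have horbit : ‖U t f - f‖ ≤ 2 * ‖f‖ := by
    simpa [hUA.isometry, two_mul] using norm_sub_le (U t f) f
  have : t * ‖g‖ ≤ t * (t * ‖h‖ + 2 / t * ‖f‖) :=
    calc t * ‖g‖ = ‖(U t f - f) - (U t f - f - t • g)‖ := by
          rw [sub_sub_cancel, norm_smul, Real.norm_of_nonneg ht.le]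
      _ ≤ 2 * ‖f‖ + ‖h‖ * t * t :=
          (norm_sub_le _ _).trans (add_le_add horbit (hUA.norm_orbit_sub_sub_smul_le hfg hgh ht.le))
      _ = t * (t * ‖h‖ + 2 / t * ‖f‖) := by field_simp; ring
  exact le_of_mul_le_mul_left this ht

end IsometryGroupGenerator

end

theorem interpolation_inequality_for_generator
    (U : ℝ → E →L[ℝ] E) (A : E →ₗ.[ℝ] E) (hUA : IsometryGroupGenerator U A) :
    ∀ n : ℕ, 2 ≤ n → ∃ C : ℝ, 0 < C ∧
      ∀ ε : ℝ, 0 < ε → ∀ m : ℕ, 1 ≤ m → m ≤ n - 1 →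
        ∀ f gm gn : E, PowGraph A m f gm → PowGraph A n f gn →
          ‖gm‖ ≤ ε ^ (n - m) * ‖gn‖ + ε ^ (-(m : ℤ)) * C * ‖f‖ := by
  intro n hn
  obtain ⟨C, hC, hinterp⟩ := exists_interpolation_const two_pos (n - 1)
  refine ⟨C, hC, fun ε hε m _ hmn f gm gn hpm hpn => ?_⟩
  obtain ⟨c, rfl, rfl, hc⟩ := hpn.exists_seq
  obtain rfl := hpm.eq_of_seq fun k hk => hc k (by omega)
  have hn' : n - 1 + 1 = n := by omega
  have := hinterp (‖c ·‖) (fun _ => norm_nonneg _)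
    (fun k hk t ht => hUA.norm_le_mul_norm_add_div_mul_norm (hc k (by omega)) (hc (k + 1) (by omega)) ht)
    ε hε m hmn
  rw [hn'] at this
  rwa [zpow_neg, zpow_natCast, mul_comm _ C, ← div_eq_mul_inv]
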